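/- arXiv:2204.10623 — 4 statements merged into one kernel-verified Lean document; each statement's English description precedes it below -/
import Mathlib

section
/- If Z_1, Z_2, ... are i.i.d. copies of a random n-vector Z with nonsingular covariance matrix, then almost surely the sequence {Z_i} contains n vectors that are linearly independent (i.e., almost surely there exist indices i_1 < ... < i_n such that Z_{i_1},...,Z_{i_n} span R^n). -/
/-!
If a proper subspace `V` carried all the mass of the law `ν` of `Z`, a nonzero functional vanishing
on `V` would be an a.s. constant linear combination of the coordinates, i.e. one of zero variance.
So `ν V < 1` for every proper subspace, and by induction on `k ≤ n` (the `k+1`-st vector must avoid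
the span of the first `k`) an i.i.d. `ν`-sample of size `n` is linearly independent with positive
probability. Cutting `Z_0, Z_1, …` into consecutive blocks of length `n` gives independent samples
of this kind, so by the second Borel–Cantelli lemma almost surely some block is independent.
-/

open MeasureTheory ProbabilityTheory Filter

lemma Submodule.exists_ne_zero_forall_sum_mul_eq_zero {K : Type*} [Field K] {n : ℕ}
    {V : Submodule K (Fin n → K)} (hV : V ≠ ⊤) :
    ∃ l : Fin n → K, l ≠ 0 ∧ ∀ x ∈ V, ∑ k, l k * x k = 0 := by
  obtain ⟨φ, hφ, hVφ⟩ := V.exists_le_ker_of_lt_top hV.lt_top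
  have hφ_apply : ∀ x, φ x = ∑ k, φ (Pi.single k 1) * x k := fun x ↦ by
    conv_lhs => rw [pi_eq_sum_univ' x]
    simp [mul_comm]
  refine ⟨fun k ↦ φ (Pi.single k 1), fun hl ↦ hφ (LinearMap.ext fun x ↦ ?_), fun x hx ↦ ?_⟩
  · simp [hφ_apply x, funext_iff.1 hl]
  · rw [← hφ_apply]
    exact hVφ hx

lemma Submodule.span_range_ne_top_of_lt_finrank {K V : Type*} [DivisionRing K] [AddCommGroup V]
    [Module K V] {k : ℕ} {g : Fin k → V} (hg : LinearIndependent K g)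
    (hk : k < Module.finrank K V) : Submodule.span K (Set.range g) ≠ ⊤ := by
  intro htop
  have := finrank_span_eq_card hg
  rw [htop, finrank_top, Fintype.card_fin] at this
  omega

lemma Nat.sigma_mul_add_injective (n : ℕ) :
    Function.Injective fun p : (_ : ℕ) × Fin n ↦ n * p.1 + p.2 := by
  rintro ⟨m, j⟩ ⟨m', j'⟩ h
  have hn : 0 < n := j.pos
  have hm : m = m' := by
    simpa [Nat.mul_add_div hn, Nat.div_eq_of_lt j.isLt, Nat.div_eq_of_lt j'.isLt]
      using congrArg (· / n) h
  subst hm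
  simpa [Fin.ext_iff] using h

lemma ProbabilityTheory.iIndepFun.curry {Ω ι : Type*} {mΩ : MeasurableSpace Ω} {P : Measure Ω}
    {κ : ι → Type*} {𝓧 : (i : ι) → κ i → Type*} {m𝓧 : ∀ i j, MeasurableSpace (𝓧 i j)}
    {X : (i : ι) → (j : κ i) → Ω → 𝓧 i j} (mX : ∀ i j, Measurable (X i j))
    (h : iIndepFun (fun (p : (i : ι) × κ i) ω ↦ X p.1 p.2 ω) P) :
    iIndepFun (fun i ω ↦ (X i · ω)) P := by
  have := h.isProbabilityMeasure
  have : ∀ i j, IsProbabilityMeasure (P.map (X i j)) :=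
    fun i j ↦ Measure.isProbabilityMeasure_map (mX i j).aemeasurable
  have hcurry : (fun ω i j ↦ X i j ω) =
      MeasurableEquiv.piCurry 𝓧 ∘ fun ω (p : (i : ι) × κ i) ↦ X p.1 p.2 ω := by
    ext; simp [Sigma.curry]
  rw [iIndepFun_iff_map_fun_eq_infinitePi_map (by fun_prop), hcurry,
    ← Measure.map_map (by fun_prop) (by fun_prop),
    (iIndepFun_iff_map_fun_eq_infinitePi_map (by fun_prop)).1 h,
    Measure.infinitePi_map_piCurry (fun i j ↦ P.map (X i j))]
  congrm Measure.infinitePi fun i ↦ ?_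
  exact ((iIndepFun_iff_map_fun_eq_infinitePi_map (by fun_prop)).1
    (h.precomp sigma_mk_injective)).symm

lemma ProbabilityTheory.iIndepFun.ae_frequently_mem {Ω β : Type*} {mΩ : MeasurableSpace Ω}
    {μ : Measure Ω} {mβ : MeasurableSpace β} {T : ℕ → Ω → β} (hT : ∀ m, Measurable (T m))
    (hindep : iIndepFun T μ) {ρ : Measure β} (hlaw : ∀ m, μ.map (T m) = ρ)
    {L : Set β} (hL : MeasurableSet L) (hρL : ρ L ≠ 0) :
    ∀ᵐ ω ∂μ, ∃ᶠ m in atTop, T m ω ∈ L := by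
  have := hindep.isProbabilityMeasure
  have hsets : iIndepSet (fun m ↦ T m ⁻¹' L) μ :=
    (iIndepSet_iff_meas_biInter fun m ↦ hT m hL).2 fun S ↦
      hindep.meas_biInter fun m _ ↦ ⟨L, hL, rfl⟩
  have hsum : ∑' m, μ (T m ⁻¹' L) = ⊤ := by
    simp_rw [← Measure.map_apply (hT _) hL, hlaw]
    exact ENNReal.tsum_const_eq_top_of_ne_zero hρL
  have hlimsup := measure_limsup_eq_one (fun m ↦ hT m hL) hsets hsum
  have hmeas : MeasurableSet (limsup (fun m ↦ T m ⁻¹' L) atTop) :=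
    .measurableSet_limsup fun m ↦ hT m hL
  filter_upwards [(ae_iff_measure_eq hmeas.nullMeasurableSet).2 (by rwa [measure_univ])]
    with ω hω
  exact mem_limsup_iff_frequently_mem.1 hω

section LinearIndependentTuples

variable {E : Type*} [NormedAddCommGroup E] [NormedSpace ℝ E] [FiniteDimensional ℝ E]
  [MeasurableSpace E] [BorelSpace E]

lemma measurableSet_setOf_linearIndependent (k : ℕ) :
    MeasurableSet {f : Fin k → E | LinearIndependent ℝ f} :=
  isOpen_setOfPred_linearIndependent.measurableSet

lemma MeasureTheory.Measure.pi_setOf_linearIndependent_pos (ν : Measure E)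
    [IsProbabilityMeasure ν] (hν : ∀ V : Submodule ℝ E, V ≠ ⊤ → ν V < 1) (k : ℕ)
    (hk : k ≤ Module.finrank ℝ E) :
    0 < Measure.pi (fun _ : Fin k ↦ ν) {f | LinearIndependent ℝ f} := by
  induction k with
  | zero => simp
  | succ k ih =>
    set π := Measure.pi (fun _ : Fin k ↦ ν)
    set B := {p : E × (Fin k → E) | LinearIndependent ℝ (Fin.cons p.1 p.2 : Fin (k + 1) → E)}
    have hB : MeasurableSet B :=
      measurableSet_setOf_linearIndependent (k + 1) |>.preimage (by fun_prop)
    have hsplit : Measure.pi (fun _ : Fin (k + 1) ↦ ν) {f | LinearIndependent ℝ f} =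
        ∫⁻ g, ν ((·, g) ⁻¹' B) ∂π := by
      rw [← Measure.prod_apply_symm hB,
        ← ((measurePreserving_piFinSuccAbove (fun _ : Fin (k + 1) ↦ ν) 0).symm).measure_preimage
          (measurableSet_setOf_linearIndependent _).nullMeasurableSet]
      congr 1
      ext p
      simp only [Set.mem_preimage, MeasurableEquiv.piFinSuccAbove_symm_apply,
        Fin.insertNthEquiv_zero, Set.mem_ofPred_eq, B]
      rfl
    have hslice : ∀ g ∈ {g : Fin k → E | LinearIndependent ℝ g}, 0 < ν ((·, g) ⁻¹' B) := by
      intro g (hg : LinearIndependent ℝ g)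
      have hV := hν _ (Submodule.span_range_ne_top_of_lt_finrank hg hk)
      have hslice_eq : ((·, g) ⁻¹' B) = (Submodule.span ℝ (Set.range g) : Set E)ᶜ := by
        ext x
        simp [B, linearIndependent_finCons, hg]
      rw [hslice_eq, prob_compl_eq_one_sub (Submodule.closed_of_finiteDimensional _).measurableSet]
      exact tsub_pos_of_lt hV
    rw [hsplit, lintegral_pos_iff_support (measurable_measure_prodMk_right hB)]
    exact (ih (by omega)).trans_le (measure_mono fun g hg ↦ (hslice g hg).ne')

end LinearIndependentTuples

section Covariance

variable {Ω : Type*} {mΩ : MeasurableSpace Ω} {μ : Measure Ω} {n : ℕ}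

lemma integral_sq_sum_mul_sub_integral_eq_zero {X : Ω → Fin n → ℝ}
    (hX : ∀ k, Integrable (fun ω ↦ X ω k) μ) {l : Fin n → ℝ}
    (hl : ∀ᵐ ω ∂μ, ∑ k, l k * X ω k = 0) :
    ∫ ω, (∑ k, l k * (X ω k - ∫ ω', X ω' k ∂μ))^2 ∂μ = 0 := by
  have hmean : ∑ k, l k * ∫ ω, X ω k ∂μ = 0 := by
    simp_rw [← integral_const_mul]
    rw [← integral_finsetSum _ fun k _ ↦ (hX k).const_mul (l k), integral_eq_zero_of_ae hl]
  refine integral_eq_zero_of_ae ?_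
  filter_upwards [hl] with ω hω
  simp only [mul_sub, Finset.sum_sub_distrib, hω, hmean, Pi.zero_apply]
  norm_num

lemma measure_map_submodule_lt_one [IsProbabilityMeasure μ] {X : Ω → Fin n → ℝ}
    (hXm : Measurable X) (hL2 : Integrable (fun ω => ‖X ω‖^2) μ)
    (hcov : ∀ l : Fin n → ℝ, l ≠ 0 →
      0 < ∫ ω, (∑ k, l k * (X ω k - ∫ ω', X ω' k ∂μ))^2 ∂μ)
    {V : Submodule ℝ (Fin n → ℝ)} (hV : V ≠ ⊤) :
    μ.map X V < 1 := by
  have hVm : MeasurableSet (V : Set (Fin n → ℝ)) :=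
    (Submodule.closed_of_finiteDimensional V).measurableSet
  obtain ⟨l, hl0, hlV⟩ := Submodule.exists_ne_zero_forall_sum_mul_eq_zero hV
  have hX : ∀ k, Integrable (fun ω ↦ X ω k) μ := fun k ↦
    ((memLp_two_iff_integrable_sq_norm hXm.aestronglyMeasurable).2 hL2).integrable one_le_two
      |>.eval k
  refine lt_of_le_of_ne prob_le_one fun hV1 ↦ (hcov l hl0).ne' ?_
  refine integral_sq_sum_mul_sub_integral_eq_zero hX ?_
  have hXV : ∀ᵐ ω ∂μ, X ω ∈ V := by
    rw [Measure.map_apply hXm hVm] at hV1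
    exact (ae_iff_measure_eq (hXm hVm).nullMeasurableSet).2 (by rwa [measure_univ])
  filter_upwards [hXV] with ω hω using hlV _ hω

end Covariance

/-- If `Z_1, Z_2, …` are i.i.d. copies of a random `n`-vector with nonsingular
covariance matrix, then almost surely the sequence contains `n` linearly
independent vectors (Lemma A.2). -/
theorem stmt_4
    {Ω : Type*} {mΩ : MeasurableSpace Ω} {μ : Measure Ω} [IsProbabilityMeasure μ]
    {n : ℕ} (Z : ℕ → Ω → (Fin n → ℝ)) (hZm : ∀ i, Measurable (Z i))
    -- independent and identically distributed
    (hindep : iIndepFun Z μ)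
    (hident : ∀ i, IdentDistrib (Z i) (Z 0) μ μ)
    -- finite second moments
    (hL2 : Integrable (fun ω => ‖Z 0 ω‖^2) μ)
    -- nonsingular covariance matrix: every nonzero linear combination has positive variance
    (hcov : ∀ l : Fin n → ℝ, l ≠ 0 →
      0 < ∫ ω, (∑ k, l k * (Z 0 ω k - ∫ ω', Z 0 ω' k ∂μ))^2 ∂μ) :
    ∀ᵐ ω ∂μ, ∃ ι : Fin n → ℕ, StrictMono ι ∧
      LinearIndependent ℝ (fun j => Z (ι j) ω) := by
  set ν := μ.map (Z 0)
  have : IsProbabilityMeasure ν := Measure.isProbabilityMeasure_map (hZm 0).aemeasurable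
  have hblock_mono : ∀ m, StrictMono fun j : Fin n ↦ n * m + j := fun m _ _ h ↦ by
    simpa using h
  have hblocks : iIndepFun (fun m ω (j : Fin n) ↦ Z (n * m + j) ω) μ :=
    .curry (fun _ _ ↦ hZm _) (hindep.precomp (Nat.sigma_mul_add_injective n))
  have hlaw : ∀ m, μ.map (fun ω (j : Fin n) ↦ Z (n * m + j) ω) = Measure.pi fun _ ↦ ν := by
    intro m
    rw [(iIndepFun_iff_map_fun_eq_pi_map fun j ↦ (hZm _).aemeasurable).1
      (hindep.precomp (hblock_mono m).injective)]
    exact congrArg Measure.pi (funext fun _ ↦ (hident _).map_eq)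
  have hpos := Measure.pi_setOf_linearIndependent_pos ν
    (fun V hV ↦ measure_map_submodule_lt_one (hZm 0) hL2 hcov hV) n (by simp)
  filter_upwards [hblocks.ae_frequently_mem (fun m ↦ by fun_prop) hlaw
    (measurableSet_setOf_linearIndependent n) hpos.ne'] with ω hω
  obtain ⟨m, hm⟩ := hω.exists
  exact ⟨_, hblock_mono m, hm⟩
end

section
/- Let w̃₁(X) = exp(λ̃₁ᵀU(X)) / E[e(X)exp(λ̃₁ᵀU(X))], where λ̃₁ satisfies the balance equations E[e(X)exp(λ̃₁ᵀU(X))(u_k(X) − m_k)] = 0 for k=1,...,K with m_k = E[u_k(X)]. If the conditional mean β₁(X) = E[Y(1)|X] is an affine function of u_1(X),...,u_K(X), then E[e(X)·w̃₁(X)·β₁(X)] = E[β₁(X)] = E[Y(1)]. -/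
/-!
With `g = e · exp (λᵀU)`, the balance equations say that the tilted probability `g μ / ∫ g` gives
each `u_k(X)` its `μ`-mean `m_k`; by linearity it then gives every affine function of `U(X)`, in
particular `β₁(X)`, its `μ`-mean. The second equality is the tower property of the conditional
expectation.
-/

open MeasureTheory ProbabilityTheory Real Finset

theorem integral_pos_of_ae_pos {α : Type*} {mα : MeasurableSpace α} {μ : Measure α} [NeZero μ]
    {f : α → ℝ} (hfi : Integrable f μ) (hf : ∀ᵐ x ∂μ, 0 < f x) : 0 < ∫ x, f x ∂μ := by
  have hsupp : Function.support f =ᵐ[μ] Set.univ :=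
    ae_eq_univ.2 (ae_iff.1 (hf.mono fun _ hx => hx.ne'))
  rw [integral_pos_iff_support_of_nonneg_ae (hf.mono fun _ hx => hx.le) hfi, measure_congr hsupp]
  exact Measure.measure_univ_pos.2 (NeZero.ne μ)

theorem norm_mul_exp_sum_mul_le {ι : Type*} [Fintype ι] {c B : ℝ} {lam f : ι → ℝ}
    (hc0 : 0 ≤ c) (hc1 : c ≤ 1) (hf : ∀ k, |f k| ≤ B) :
    ‖c * exp (∑ j, lam j * f j)‖ ≤ exp (∑ j, |lam j| * B) := by
  rw [norm_of_nonneg (mul_nonneg hc0 (exp_pos _).le)]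
  refine (mul_le_of_le_one_left (exp_pos _).le hc1).trans (exp_le_exp.2 <| sum_le_sum fun j _ => ?_)
  calc lam j * f j ≤ |lam j| * |f j| := (le_abs_self _).trans (abs_mul _ _).le
    _ ≤ |lam j| * B := mul_le_mul_of_nonneg_left (hf j) (abs_nonneg _)

section Balancing

variable {Ω ι : Type*} {mΩ : MeasurableSpace Ω} {μ : Measure Ω} [Fintype ι]

theorem integral_mul_const_add_sum_mul_of_balanced {w : Ω → ℝ} {v : ι → Ω → ℝ} {m : ι → ℝ}
    (hw : Integrable w μ) (hwv : ∀ k, Integrable (fun ω => w ω * v k ω) μ)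
    (hbal : ∀ k, ∫ ω, w ω * (v k ω - m k) ∂μ = 0) (a0 : ℝ) (a : ι → ℝ) :
    ∫ ω, w ω * (a0 + ∑ k, a k * v k ω) ∂μ = (a0 + ∑ k, a k * m k) * ∫ ω, w ω ∂μ := by
  have hint : ∀ k, Integrable (fun ω => w ω * (v k ω - m k)) μ := fun k => by
    simp_rw [mul_sub]
    exact (hwv k).sub (hw.mul_const (m k))
  calc ∫ ω, w ω * (a0 + ∑ k, a k * v k ω) ∂μ
      = ∫ ω, (a0 + ∑ k, a k * m k) * w ω + ∑ k, a k * (w ω * (v k ω - m k)) ∂μ := by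
        congr 1; funext ω
        simp only [mul_sub, mul_add, add_mul, mul_sum, sum_mul, sum_sub_distrib]
        ring_nf
    _ = (a0 + ∑ k, a k * m k) * ∫ ω, w ω ∂μ := by
        rw [integral_add (hw.const_mul _) (integrable_finsetSum _ fun k _ => (hint k).const_mul _),
          integral_const_mul, integral_finsetSum _ fun k _ => (hint k).const_mul _]
        simp only [integral_const_mul, hbal, mul_zero, sum_const_zero, add_zero]

theorem integral_const_add_sum_mul [IsProbabilityMeasure μ] {v : ι → Ω → ℝ}
    (hv : ∀ k, Integrable (v k) μ) (a0 : ℝ) (a : ι → ℝ) :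
    ∫ ω, a0 + ∑ k, a k * v k ω ∂μ = a0 + ∑ k, a k * ∫ ω, v k ω ∂μ := by
  have hbal : ∀ k, ∫ ω, 1 * (v k ω - ∫ ω, v k ω ∂μ) ∂μ = 0 := fun k => by
    simp [integral_sub (hv k) (integrable_const _)]
  have h := integral_mul_const_add_sum_mul_of_balanced (integrable_const 1)
    (by simpa only [one_mul] using hv) hbal a0 a
  simpa only [one_mul, integral_const, probReal_univ, smul_eq_mul, mul_one] using h

end Balancing

theorem stmt_8_general
    {Ω : Type*} {mΩ : MeasurableSpace Ω} {μ : Measure Ω} [IsProbabilityMeasure μ]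
    {p K : ℕ} (X : Ω → (Fin p → ℝ)) (hX : Measurable X)
    (e : (Fin p → ℝ) → ℝ) (he : Measurable e)
    (hescore : ∀ᵐ ω ∂μ, 0 < e (X ω) ∧ e (X ω) < 1)
    (u : Fin K → (Fin p → ℝ) → ℝ) (hu : ∀ k, Measurable (u k))
    (hubd : ∃ B : ℝ, ∀ k x', |u k x'| ≤ B)
    (m : Fin K → ℝ) (hm : ∀ k, m k = ∫ ω, u k (X ω) ∂μ)
    (lam : Fin K → ℝ)
    -- the balance equations for `λ̃₁`
    (hbal : ∀ k, (∫ ω, e (X ω) * exp (∑ j, lam j * u j (X ω)) * (u k (X ω) - m k) ∂μ) = 0)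
    -- the limiting weight function
    (wt : (Fin p → ℝ) → ℝ)
    (hwt : ∀ x', wt x' = exp (∑ j, lam j * u j x')
            / ∫ ω, e (X ω) * exp (∑ j, lam j * u j (X ω)) ∂μ)
    -- outcome and conditional mean: `β₁(X) = E[Y(1)|X]`
    (Y1 : Ω → ℝ)
    (b1 : (Fin p → ℝ) → ℝ)
    (hb1 : μ[Y1 | MeasurableSpace.comap X inferInstance] =ᵐ[μ] fun ω => b1 (X ω))
    -- `β₁` is affine in `u_1, …, u_K`
    (a0 : ℝ) (a : Fin K → ℝ)
    (haff : ∀ᵐ ω ∂μ, b1 (X ω) = a0 + ∑ k, a k * u k (X ω)) :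
    (∫ ω, e (X ω) * wt (X ω) * b1 (X ω) ∂μ) = (∫ ω, b1 (X ω) ∂μ) ∧
      (∫ ω, b1 (X ω) ∂μ) = ∫ ω, Y1 ω ∂μ := by
  obtain ⟨B, hB⟩ := hubd
  set g : Ω → ℝ := fun ω => e (X ω) * exp (∑ j, lam j * u j (X ω))
  have huX : ∀ k, Measurable fun ω => u k (X ω) := fun k => (hu k).comp hX
  have huX_bdd : ∀ k, ∀ᵐ ω ∂μ, ‖u k (X ω)‖ ≤ B := fun k => ae_of_all _ fun ω => hB k (X ω)
  have hg_meas : Measurable g :=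
    (he.comp hX).mul (measurable_exp.comp (Finset.measurable_sum _ fun j _ => (huX j).const_mul _))
  have hg_bdd : ∀ᵐ ω ∂μ, ‖g ω‖ ≤ exp (∑ j, |lam j| * B) :=
    hescore.mono fun ω h => norm_mul_exp_sum_mul_le h.1.le h.2.le fun k => hB k _
  have hg_int : Integrable g μ := .of_bound hg_meas.aestronglyMeasurable _ hg_bdd
  have hgu_int : ∀ k, Integrable (fun ω => g ω * u k (X ω)) μ := fun k =>
    hg_int.mul_bdd (huX k).aestronglyMeasurable (huX_bdd k)
  have hZ : 0 < ∫ ω, g ω ∂μ :=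
    integral_pos_of_ae_pos hg_int (hescore.mono fun ω h => mul_pos h.1 (exp_pos _))
  have hb1_mean : ∫ ω, b1 (X ω) ∂μ = a0 + ∑ k, a k * m k := by
    rw [integral_congr_ae haff,
      integral_const_add_sum_mul (fun k => .of_bound (huX k).aestronglyMeasurable B (huX_bdd k))]
    simp only [hm]
  refine ⟨?_, by rw [← integral_congr_ae hb1, integral_condExp hX.comap_le]⟩
  calc ∫ ω, e (X ω) * wt (X ω) * b1 (X ω) ∂μ
      = (∫ ω, g ω * (a0 + ∑ k, a k * u k (X ω)) ∂μ) / ∫ ω, g ω ∂μ := by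
        rw [← integral_div]
        refine integral_congr_ae ?_
        filter_upwards [haff] with ω h
        rw [hwt, h]
        ring
    _ = ∫ ω, b1 (X ω) ∂μ := by
        rw [integral_mul_const_add_sum_mul_of_balanced hg_int hgu_int hbal, hb1_mean,
          mul_div_cancel_right₀ _ hZ.ne']

/-- If `β₁(X) = E[Y(1)|X]` is affine in the balanced functions, the limiting
Kullback-Leibler weights recover `E[Y(1)]`: `E[e(X) w̃₁(X) β₁(X)] = E[β₁(X)] = E[Y(1)]`. -/
theorem stmt_8
    {Ω : Type*} {mΩ : MeasurableSpace Ω} {μ : Measure Ω} [IsProbabilityMeasure μ]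
    {p K : ℕ} (X : Ω → (Fin p → ℝ)) (hX : Measurable X)
    (e : (Fin p → ℝ) → ℝ) (he : Measurable e)
    (hescore : ∀ᵐ ω ∂μ, 0 < e (X ω) ∧ e (X ω) < 1)
    (u : Fin K → (Fin p → ℝ) → ℝ) (hu : ∀ k, Measurable (u k))
    (hubd : ∃ B : ℝ, ∀ k x', |u k x'| ≤ B)
    (m : Fin K → ℝ) (hm : ∀ k, m k = ∫ ω, u k (X ω) ∂μ)
    (lam : Fin K → ℝ)
    -- the balance equations for `λ̃₁`
    (hbal : ∀ k, (∫ ω, e (X ω) * exp (∑ j, lam j * u j (X ω)) * (u k (X ω) - m k) ∂μ) = 0)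
    -- the limiting weight function
    (wt : (Fin p → ℝ) → ℝ)
    (hwt : ∀ x', wt x' = exp (∑ j, lam j * u j x')
            / ∫ ω, e (X ω) * exp (∑ j, lam j * u j (X ω)) ∂μ)
    -- outcome and conditional mean: `β₁(X) = E[Y(1)|X]`
    (Y1 : Ω → ℝ) (hY1 : Integrable Y1 μ)
    (b1 : (Fin p → ℝ) → ℝ)
    (hb1 : μ[Y1 | MeasurableSpace.comap X inferInstance] =ᵐ[μ] fun ω => b1 (X ω))
    (hb1int : Integrable (fun ω => b1 (X ω)) μ)
    -- `β₁` is affine in `u_1, …, u_K`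
    (a0 : ℝ) (a : Fin K → ℝ)
    (haff : ∀ᵐ ω ∂μ, b1 (X ω) = a0 + ∑ k, a k * u k (X ω)) :
    (∫ ω, e (X ω) * wt (X ω) * b1 (X ω) ∂μ) = (∫ ω, b1 (X ω) ∂μ) ∧
      (∫ ω, b1 (X ω) ∂μ) = ∫ ω, Y1 ω ∂μ :=
  stmt_8_general (mΩ := mΩ) X hX e he hescore u hu hubd m hm lam hbal wt hwt Y1 b1 hb1 a0 a haff
end

section
/- Let w̃₁(X) = exp(λ̃₁ᵀU(X)) / E[e(X)exp(λ̃₁ᵀU(X))], where λ̃₁ satisfies E[e(X)exp(λ̃₁ᵀU(X))(u_k(X) − m_k)] = 0 for all k and m_k = E[u_k(X)]. If log e(X) is an affine function of u_1(X),...,u_K(X), then w̃₁(X) = 1/e(X) almost surely, and consequently E[e(X)·w̃₁(X)·g(X)] = E[g(X)] for every integrable g(X). -/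
open MeasureTheory Real
open scoped BigOperators

lemma aux_mul_nonneg (x : ℝ) : 0 ≤ (Real.exp x - 1) * x := by
  rcases le_or_gt 0 x with h | h
  · exact mul_nonneg (by simpa using Real.one_le_exp h) h
  · have h2 : Real.exp x < 1 := Real.exp_lt_one_iff.2 h
    nlinarith

lemma aux_eq_zero {x : ℝ} (h : (Real.exp x - 1) * x = 0) : x = 0 := by
  by_contra hx
  rcases lt_or_gt_of_ne hx with h1 | h1
  · have h2 : Real.exp x < 1 := Real.exp_lt_one_iff.2 h1
    nlinarith
  · have h2 : 1 < Real.exp x := Real.one_lt_exp_iff.2 h1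
    nlinarith

/-- If `log e(X)` is affine in the balanced functions, the limiting Kullback-Leibler
weight equals the inverse propensity score a.s., hence `E[e(X) w̃₁(X) g(X)] = E[g(X)]`
for every integrable `g(X)`. -/
theorem stmt_9
    {Ω : Type*} {mΩ : MeasurableSpace Ω} {μ : Measure Ω} [IsProbabilityMeasure μ]
    {p K : ℕ} (X : Ω → (Fin p → ℝ)) (hX : Measurable X)
    (e : (Fin p → ℝ) → ℝ) (he : Measurable e)
    -- overlap
    (η : ℝ) (hη : 0 < η) (hover : ∀ᵐ ω ∂μ, η < e (X ω) ∧ e (X ω) < 1 - η)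
    (u : Fin K → (Fin p → ℝ) → ℝ) (hu : ∀ k, Measurable (u k))
    (hubd : ∃ B : ℝ, ∀ k x', |u k x'| ≤ B)
    -- nonsingular covariance matrix of `U(X)` (so the dual solution is unique)
    (hcov : ∀ l : Fin K → ℝ, l ≠ 0 →
      0 < ∫ ω, (∑ k, l k * (u k (X ω) - ∫ ω', u k (X ω') ∂μ))^2 ∂μ)
    (m : Fin K → ℝ) (hm : ∀ k, m k = ∫ ω, u k (X ω) ∂μ)
    (lam : Fin K → ℝ)
    -- the balance equations for `λ̃₁`
    (hbal : ∀ k, (∫ ω, e (X ω) * exp (∑ j, lam j * u j (X ω)) * (u k (X ω) - m k) ∂μ) = 0)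
    -- the limiting weight function
    (wt : (Fin p → ℝ) → ℝ)
    (hwt : ∀ x', wt x' = exp (∑ j, lam j * u j x')
            / ∫ ω, e (X ω) * exp (∑ j, lam j * u j (X ω)) ∂μ)
    -- `log e(X)` is affine in `u_1, …, u_K`
    (c0 : ℝ) (c : Fin K → ℝ)
    (haff : ∀ᵐ ω ∂μ, log (e (X ω)) = c0 + ∑ k, c k * u k (X ω)) :
    (∀ᵐ ω ∂μ, wt (X ω) = 1 / e (X ω)) ∧
    (∀ g : (Fin p → ℝ) → ℝ, Measurable g → Integrable (fun ω => g (X ω)) μ →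
      (∫ ω, e (X ω) * wt (X ω) * g (X ω) ∂μ) = ∫ ω, g (X ω) ∂μ) := by
  obtain ⟨B, hB⟩ := hubd
  have hUm : ∀ k, Measurable fun ω => u k (X ω) := fun k => (hu k).comp hX
  -- a generic integrability lemma for bounded measurable functions
  have hint : ∀ F : Ω → ℝ, Measurable F → ∀ C : ℝ, (∀ ω, |F ω| ≤ C) → Integrable F μ := by
    intro F hF C hC
    exact (integrable_const C).mono' hF.aestronglyMeasurable (ae_of_all _ fun ω => by
      simpa using hC ω)
  set d : Fin K → ℝ := fun k => c k + lam k with hd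
  set f : Ω → ℝ := fun ω => ∑ k, d k * (u k (X ω) - m k) with hf
  have hfm : Measurable f :=
    Finset.measurable_sum _ fun k _ => measurable_const.mul ((hUm k).sub measurable_const)
  set Cf : ℝ := ∑ k, |d k| * (B + |m k|) with hCf
  have hfC : ∀ ω, |f ω| ≤ Cf := by
    intro ω
    calc |f ω| ≤ ∑ k, |d k * (u k (X ω) - m k)| := Finset.abs_sum_le_sum_abs _ _
      _ ≤ Cf := by
          apply Finset.sum_le_sum
          intro k _
          rw [abs_mul]
          gcongr
          calc |u k (X ω) - m k| ≤ |u k (X ω)| + |m k| := abs_sub _ _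
            _ ≤ B + |m k| := by gcongr; exact hB k _
  set t : ℝ := c0 + ∑ k, d k * m k with ht
  have hkey : ∀ ω, t + f ω = c0 + ∑ k, c k * u k (X ω) + ∑ j, lam j * u j (X ω) := by
    intro ω
    simp only [ht, hf, hd, mul_sub, Finset.sum_sub_distrib, add_mul, Finset.sum_add_distrib]
    ring
  clear_value d f Cf t
  have hepos : ∀ᵐ ω ∂μ, 0 < e (X ω) := hover.mono fun ω h => hη.trans h.1
  have heE : ∀ᵐ ω ∂μ, e (X ω) = Real.exp (c0 + ∑ k, c k * u k (X ω)) := by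
    filter_upwards [haff, hepos] with ω h1 h2
    rw [← h1, Real.exp_log h2]
  -- rewritten balance equations
  have hbal' : ∀ k, (∫ ω, Real.exp (t + f ω) * (u k (X ω) - m k) ∂μ) = 0 := by
    intro k
    rw [← hbal k]
    apply integral_congr_ae
    filter_upwards [heE] with ω hω
    rw [hω, ← Real.exp_add, ← hkey]
  -- exp bound
  have hexpC : ∀ ω, |Real.exp (t + f ω)| ≤ Real.exp (|t| + Cf) := by
    intro ω
    rw [abs_of_pos (Real.exp_pos _)]
    apply Real.exp_le_exp.2
    have := hfC ω
    have := le_abs_self t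
    have := le_abs_self (f ω)
    linarith
  -- weighted sum of balance equations
  have h2 : (∫ ω, Real.exp (t + f ω) * f ω ∂μ) = 0 := by
    have heq : (fun ω => Real.exp (t + f ω) * f ω)
        = fun ω => ∑ k, d k * (Real.exp (t + f ω) * (u k (X ω) - m k)) := by
      funext ω
      simp only [hf, Finset.mul_sum]
      apply Finset.sum_congr rfl
      intro k _; ring
    rw [heq, integral_finset_sum]
    · apply Finset.sum_eq_zero
      intro k _
      rw [integral_const_mul, hbal' k, mul_zero]
    · intro k _
      refine hint (fun ω => d k * (Real.exp (t + f ω) * (u k (X ω) - m k)))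
        (measurable_const.mul (((measurable_const.add hfm).exp).mul
          ((hUm k).sub measurable_const)))
        (|d k| * (Real.exp (|t| + Cf) * (B + |m k|))) ?_
      intro ω
      have h1 := hexpC ω
      have h2 : |u k (X ω) - m k| ≤ B + |m k| :=
        (abs_sub _ _).trans (by gcongr; exact hB k _)
      calc |d k * (Real.exp (t + f ω) * (u k (X ω) - m k))|
          = |d k| * (|Real.exp (t + f ω)| * |u k (X ω) - m k|) := by
            rw [abs_mul, abs_mul]
        _ ≤ |d k| * (Real.exp (|t| + Cf) * (B + |m k|)) := by
            apply mul_le_mul_of_nonneg_left _ (abs_nonneg _)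
            exact mul_le_mul h1 h2 (abs_nonneg _) (Real.exp_pos _).le
  -- mean of f is zero
  have hintu : ∀ k, Integrable (fun ω => u k (X ω)) μ :=
    fun k => hint _ (hUm k) B fun ω => hB k _
  have h3 : (∫ ω, f ω ∂μ) = 0 := by
    simp only [hf]
    rw [integral_finset_sum]
    · apply Finset.sum_eq_zero
      intro k _
      rw [integral_const_mul, integral_sub (hintu k) (integrable_const _),
        integral_const]
      simp [← hm k]
    · intro k _
      exact (((hintu k).sub (integrable_const _)).const_mul _)
  -- the key nonnegative integrand
  have hintf : Integrable f μ := hint f hfm Cf hfC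
  have hintef : Integrable (fun ω => Real.exp (t + f ω) * f ω) μ := by
    refine hint (fun ω => Real.exp (t + f ω) * f ω)
      (((measurable_const.add hfm).exp).mul hfm) (Real.exp (|t| + Cf) * Cf) ?_
    intro ω
    rw [abs_mul]
    exact mul_le_mul (hexpC ω) (hfC ω) (abs_nonneg _) (Real.exp_pos _).le
  have h4 : (∫ ω, (Real.exp (t + f ω) - Real.exp t) * f ω ∂μ) = 0 := by
    have heq : (fun ω => (Real.exp (t + f ω) - Real.exp t) * f ω)
        = fun ω => Real.exp (t + f ω) * f ω - Real.exp t * f ω := by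
      funext ω; ring
    rw [heq, integral_sub hintef (hintf.const_mul _), h2, integral_const_mul, h3,
      mul_zero, sub_zero]
  have hnn : ∀ ω, 0 ≤ (Real.exp (t + f ω) - Real.exp t) * f ω := by
    intro ω
    have h0 : (Real.exp (t + f ω) - Real.exp t) * f ω
        = Real.exp t * ((Real.exp (f ω) - 1) * f ω) := by
      rw [Real.exp_add]; ring
    rw [h0]
    exact mul_nonneg (Real.exp_pos t).le (aux_mul_nonneg _)
  have hintnn : Integrable (fun ω => (Real.exp (t + f ω) - Real.exp t) * f ω) μ := by
    have heq : (fun ω => (Real.exp (t + f ω) - Real.exp t) * f ω)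
        = fun ω => Real.exp (t + f ω) * f ω - Real.exp t * f ω := by
      funext ω; ring
    rw [heq]
    exact hintef.sub (hintf.const_mul _)
  have hfz : ∀ᵐ ω ∂μ, f ω = 0 := by
    have := (integral_eq_zero_iff_of_nonneg_ae (ae_of_all _ hnn) hintnn).1 h4
    filter_upwards [this] with ω hω
    have hω' : (Real.exp (t + f ω) - Real.exp t) * f ω = 0 := by simpa using hω
    have h0 : Real.exp t * ((Real.exp (f ω) - 1) * f ω) = 0 := by
      rw [← hω', Real.exp_add]; ring
    exact aux_eq_zero ((mul_eq_zero.1 h0).resolve_left (Real.exp_ne_zero t))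
  -- hence d = 0
  have hdz : d = 0 := by
    by_contra hne
    have hpos := hcov d hne
    have : (∫ ω, (∑ k, d k * (u k (X ω) - ∫ ω', u k (X ω') ∂μ))^2 ∂μ) = 0 := by
      have heq : ∀ᵐ ω ∂μ, (∑ k, d k * (u k (X ω) - ∫ ω', u k (X ω') ∂μ))^2 = 0 := by
        filter_upwards [hfz] with ω hω
        have : (∑ k, d k * (u k (X ω) - ∫ ω', u k (X ω') ∂μ)) = f ω := by
          simp only [hf]
          apply Finset.sum_congr rfl
          intro k _
          rw [hm k]
        rw [this, hω]
        simp
      rw [integral_congr_ae heq, integral_zero]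
    rw [this] at hpos
    exact lt_irrefl 0 hpos
  have hlam : ∀ k, lam k = -c k := by
    intro k
    have := congrFun hdz k
    simp only [hd, Pi.zero_apply] at this
    linarith
  -- the denominator equals exp c0
  have hlamsum : ∀ x', (∑ j, lam j * u j x') = -∑ j, c j * u j x' := by
    intro x'
    rw [← Finset.sum_neg_distrib]
    apply Finset.sum_congr rfl
    intro j _
    rw [hlam j]; ring
  have hD : (∫ ω, e (X ω) * Real.exp (∑ j, lam j * u j (X ω)) ∂μ) = Real.exp c0 := by
    have heq : ∀ᵐ ω ∂μ, e (X ω) * Real.exp (∑ j, lam j * u j (X ω)) = Real.exp c0 := by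
      filter_upwards [heE] with ω hω
      rw [hω, hlamsum, ← Real.exp_add]
      congr 1
      ring
    rw [integral_congr_ae heq, integral_const]
    simp
  -- first conclusion
  have hmain : ∀ᵐ ω ∂μ, wt (X ω) = 1 / e (X ω) := by
    filter_upwards [heE] with ω hω
    rw [hwt, hD, hω, hlamsum, Real.exp_add, Real.exp_neg]
    field_simp
  refine ⟨hmain, ?_⟩
  intro g hg hgint
  apply integral_congr_ae
  filter_upwards [hmain, hepos] with ω h1 h2
  rw [h1]
  field_simp
end

section
/- Suppose U(X) is symmetric, i.e., U(X) and −U(X) have the same distribution, and T = I(ηᵀU(X) + ε > 0) where ε is independent of X and ε, −ε are identically distributed with P(ηᵀU(X) + ε = 0) = 0. Then the conditional law of U(X) given T=1 equals the law of −U(X) given T=0: P(U(X) ∈ A | T=1) = P(−U(X) ∈ A | T=0) for all measurable A ⊆ R^K, and P(T=1) = 1/2. -/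
open MeasureTheory ProbabilityTheory
open scoped BigOperators ENNReal

/-- Symmetric design (Scenario 1): if `U(X)` is symmetric, `T = I(ηᵀU(X) + ε > 0)` with
`ε` independent of `X` and symmetric, and the boundary has probability zero, then
`P(T = 1) = 1/2` and the law of `U(X)` given `T = 1` equals the law of `−U(X)`
given `T = 0`. -/
theorem stmt_12
    {Ω : Type*} {mΩ : MeasurableSpace Ω} {μ : Measure Ω} [IsProbabilityMeasure μ]
    {K : ℕ} (V : Ω → (Fin K → ℝ)) (hV : Measurable V)
    (ε : Ω → ℝ) (hε : Measurable ε)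
    -- `ε` independent of `X` (hence of `U(X)`)
    (hindep : IndepFun V ε μ)
    -- `U(X)` and `−U(X)` identically distributed; `ε` and `−ε` identically distributed
    (hVsym : Measure.map V μ = Measure.map (fun ω => -V ω) μ)
    (hεsym : Measure.map ε μ = Measure.map (fun ω => -ε ω) μ)
    (η : Fin K → ℝ)
    -- no atom at the boundary: `P(ηᵀU(X) + ε = 0) = 0`
    (hzero : μ {ω | (∑ k, η k * V ω k) + ε ω = 0} = 0)
    -- the treatment and control events `{T = 1}` and `{T = 0}`
    (S1 S0 : Set Ω)
    (hS1 : S1 = {ω | 0 < (∑ k, η k * V ω k) + ε ω}) (hS0 : S0 = S1ᶜ)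
    (hP1 : 0 < μ S1) (hP1' : μ S1 < 1) :
    μ S1 = 1/2 ∧
    ∀ A : Set (Fin K → ℝ), MeasurableSet A →
      μ[|S1] {ω | V ω ∈ A} = μ[|S0] {ω | -V ω ∈ A} := by
  have hfm : Measurable (fun ω => (∑ k, η k * V ω k) + ε ω) := by
    exact (Finset.measurable_sum _ fun k _ =>
      (measurable_const.mul ((measurable_pi_apply k).comp hV))).add hε
  set f : Ω → ℝ := fun ω => (∑ k, η k * V ω k) + ε ω with hf
  have hnegV : Measurable (fun ω => -V ω) := hV.neg
  have hnegε : Measurable (fun ω => -ε ω) := hε.neg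
  have hindep' : IndepFun (fun ω => -V ω) (fun ω => -ε ω) μ :=
    hindep.comp measurable_neg measurable_neg
  have hjoint : Measure.map (fun ω => (V ω, ε ω)) μ
      = Measure.map (fun ω => (-V ω, -ε ω)) μ := by
    rw [(indepFun_iff_map_prod_eq_prod_map_map hV.aemeasurable hε.aemeasurable).mp hindep,
        (indepFun_iff_map_prod_eq_prod_map_map hnegV.aemeasurable hnegε.aemeasurable).mp hindep',
        hVsym, hεsym]
  have key : ∀ B : Set ((Fin K → ℝ) × ℝ), MeasurableSet B →
      μ ((fun ω => (V ω, ε ω)) ⁻¹' B) = μ ((fun ω => (-V ω, -ε ω)) ⁻¹' B) := by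
    intro B hB
    rw [← Measure.map_apply (hV.prodMk hε) hB,
        ← Measure.map_apply (hnegV.prodMk hnegε) hB, hjoint]
  -- the key identity on intersections
  have hgm : Measurable (fun p : (Fin K → ℝ) × ℝ => (∑ k, η k * p.1 k) + p.2) := by
    exact (Finset.measurable_sum _ fun k _ =>
      (measurable_const.mul ((measurable_pi_apply k).comp measurable_fst))).add measurable_snd
  have main : ∀ A : Set (Fin K → ℝ), MeasurableSet A →
      μ ({ω | V ω ∈ A} ∩ {ω | 0 < f ω}) = μ ({ω | -V ω ∈ A} ∩ {ω | f ω < 0}) := by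
    intro A hA
    have hB : MeasurableSet {p : (Fin K → ℝ) × ℝ | p.1 ∈ A ∧ 0 < (∑ k, η k * p.1 k) + p.2} :=
      (measurable_fst hA).inter (measurableSet_lt measurable_const hgm)
    have h := key _ hB
    have e1 : (fun ω => (V ω, ε ω)) ⁻¹' {p : (Fin K → ℝ) × ℝ | p.1 ∈ A ∧ 0 < (∑ k, η k * p.1 k) + p.2}
        = {ω | V ω ∈ A} ∩ {ω | 0 < f ω} := by
      ext ω; simp [hf, Set.mem_setOf_eq]
    have e2 : (fun ω => (-V ω, -ε ω)) ⁻¹' {p : (Fin K → ℝ) × ℝ | p.1 ∈ A ∧ 0 < (∑ k, η k * p.1 k) + p.2}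
        = {ω | -V ω ∈ A} ∩ {ω | f ω < 0} := by
      ext ω
      have h3 : (∑ k, η k * (-V ω) k) + (-ε ω) = -f ω := by
        simp only [hf, Pi.neg_apply, mul_neg]
        rw [neg_add]
        congr 1
        rw [← Finset.sum_neg_distrib]
      simp only [Set.mem_preimage, Set.mem_setOf_eq, Set.mem_inter_iff]
      rw [h3, neg_pos]
    rw [e1, e2] at h
    exact h
  have hS1m : MeasurableSet S1 := by
    rw [hS1]; exact measurableSet_lt measurable_const hfm
  have hS0m : MeasurableSet S0 := by rw [hS0]; exact hS1m.compl
  -- μ S0 ∩ t = μ {f < 0} ∩ t for any t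
  have hS0split : ∀ t : Set Ω, μ (S0 ∩ t) = μ ({ω | f ω < 0} ∩ t) := by
    intro t
    have hsub1 : {ω | f ω < 0} ∩ t ⊆ S0 ∩ t := by
      intro ω hω
      refine ⟨?_, hω.2⟩
      rw [hS0, hS1]
      simp only [Set.mem_compl_iff, Set.mem_setOf_eq, not_lt]
      exact le_of_lt hω.1
    have hsub2 : S0 ∩ t ⊆ ({ω | f ω < 0} ∩ t) ∪ {ω | f ω = 0} := by
      intro ω hω
      rcases lt_trichotomy (f ω) 0 with h | h | h
      · exact Or.inl ⟨h, hω.2⟩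
      · exact Or.inr h
      · exfalso
        have hmem := hω.1
        rw [hS0, hS1] at hmem
        exact hmem h
    refine le_antisymm ?_ (measure_mono hsub1)
    calc μ (S0 ∩ t) ≤ μ (({ω | f ω < 0} ∩ t) ∪ {ω | f ω = 0}) := measure_mono hsub2
      _ ≤ μ ({ω | f ω < 0} ∩ t) + μ {ω | f ω = 0} := measure_union_le _ _
      _ = μ ({ω | f ω < 0} ∩ t) := by rw [hzero, add_zero]
  have hS0S1 : μ S0 = μ S1 := by
    have huniv := main Set.univ MeasurableSet.univ
    simp only [Set.mem_univ, Set.setOf_true, Set.univ_inter] at huniv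
    have hS1eq : μ S1 = μ {ω | 0 < f ω} := by rw [hS1]
    have hS0eq : μ S0 = μ {ω | f ω < 0} := by
      have := hS0split Set.univ; simpa using this
    rw [hS0eq, ← huniv, ← hS1eq]
  have hadd : μ S1 + μ S0 = 1 := by
    have := measure_add_measure_compl (μ := μ) hS1m
    rw [measure_univ] at this
    rw [hS0]; exact this
  have hS1half : μ S1 = 1/2 := by
    rw [hS0S1, ← two_mul] at hadd
    rw [ENNReal.eq_div_iff (by norm_num) (by norm_num)]
    exact hadd
  refine ⟨hS1half, fun A hA => ?_⟩
  have hS0half : μ S0 = 1/2 := hS0S1.trans hS1half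
  rw [cond_apply hS1m, cond_apply hS0m, hS1half, hS0half]
  congr 1
  have h1 : S1 ∩ {ω | V ω ∈ A} = {ω | V ω ∈ A} ∩ {ω | 0 < f ω} := by
    rw [hS1, Set.inter_comm]
  rw [h1, main A hA, Set.inter_comm {ω | -V ω ∈ A} {ω | f ω < 0}, ← hS0split]
end
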